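/- For n ≥ 0, the integral (8/π²) ∫_0^π ∫_0^π (2cos θ₁ + 2cos θ₂)^n (cos θ₁ − cos θ₂)² sin²θ₁ sin²θ₂ dθ₁ dθ₂ equals c_n·c_{n+4} − c_{n+2}², where c_m = (2/(m+2))·binom(m, m/2) for even m and c_m = 0 for odd m. -/

import Mathlib

open Real

/-- The Catalan sequence interleaved with zeros: `c m = (2/(m+2)) binom(m, m/2)` for
`m` even and `0` for `m` odd. -/
noncomputable def cSeq (m : ℕ) : ℝ :=
  if Even m then (2 / ((m : ℝ) + 2)) * (m.choose (m / 2) : ℝ) else 0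

/-!
Write `x = 2 cos θ`. The Weyl density `(cos θ₁ - cos θ₂)² sin² θ₁ sin² θ₂` is a combination of
products `cos (r θ₁) cos (s θ₂)` with `0 ≤ r, s ≤ 4`, so the moment reduces to the integrals
`M_n(r, s) = ∫∫ (x₁ + x₂)ⁿ cos (r θ₁) cos (s θ₂)`. As
`2 cos θ cos (r θ) = cos ((r - 1) θ) + cos ((r + 1) θ)`, multiplying by `x₁ + x₂` moves `(r, s)`
by a unit step of `ℤ²`, and orthogonality of the cosines on `[0, π]` gives `M_0`. In the
coordinates `r + s, r - s` a unit step is a diagonal step, so `M_n(r, s) = π² w_n(r + s) w_n(r - s)`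
where `w_n(t)` counts the `±1` walks of length `n` from `0` to `t`. Since the Catalan number `C_a`
is `binom(2a, a) - binom(2a, a + 1)`, `c_m = w_m(0) - w_m(2)`, and the theorem becomes a polynomial
identity in `w_n(0), w_n(2), w_n(4), w_n(6)`.
-/

noncomputable def walkCount : ℕ → ℤ → ℝ
  | 0, t => if t = 0 then 1 else 0
  | n + 1, t => walkCount n (t - 1) + walkCount n (t + 1)

theorem walkCount_neg (n : ℕ) (t : ℤ) : walkCount n (-t) = walkCount n t := by
  induction n generalizing t with
  | zero => simp [walkCount]
  | succ n ih =>
    rw [walkCount, walkCount, ← ih (t + 1), ← ih (t - 1)]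
    ring_nf

theorem walkCount_eq_zero_of_lt_natAbs {n : ℕ} {t : ℤ} (h : n < t.natAbs) :
    walkCount n t = 0 := by
  induction n generalizing t with
  | zero => simp [walkCount]; omega
  | succ n ih => rw [walkCount, ih (by omega), ih (by omega), add_zero]

theorem walkCount_eq_zero_of_odd {n : ℕ} {t : ℤ} (h : Odd (n + t)) : walkCount n t = 0 := by
  rw [Int.odd_iff] at h
  induction n generalizing t with
  | zero => simp [walkCount]; omega
  | succ n ih => rw [walkCount, ih (by omega), ih (by omega), add_zero]

theorem walkCount_two_mul_sub (n k : ℕ) : walkCount n (2 * k - n) = n.choose k := by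
  induction n generalizing k with
  | zero => cases k <;> simp [walkCount]; omega
  | succ n ih =>
    rcases k with _ | k
    · rw [walkCount, walkCount_eq_zero_of_lt_natAbs (by omega)]
      simpa using ih 0
    · rw [walkCount, Nat.choose_succ_succ, Nat.cast_add (R := ℝ), ← ih k, ← ih (k + 1)]
      congr 2 <;> push_cast <;> ring

theorem cSeq_eq_walkCount_sub (m : ℕ) : cSeq m = walkCount m 0 - walkCount m 2 := by
  rcases Nat.even_or_odd m with ⟨a, rfl⟩ | hm
  · have h₀ := walkCount_two_mul_sub (a + a) a
    have h₂ := walkCount_two_mul_sub (a + a) (a + 1)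
    push_cast at h₀ h₂
    rw [show 2 * (a : ℤ) - (a + a) = 0 by ring] at h₀
    rw [show 2 * ((a : ℤ) + 1) - (a + a) = 2 by ring] at h₂
    have hpascal : ((a + a).choose (a + 1) : ℝ) * (a + 1) = (a + a).choose a * a := by
      have := Nat.choose_succ_right_eq (a + a) a
      rw [Nat.add_sub_cancel] at this
      exact_mod_cast this
    rw [cSeq, if_pos ⟨a, rfl⟩, h₀, h₂, show (a + a) / 2 = a by omega]
    field_simp
    push_cast
    linear_combination 2 * hpascal
  · have hm' := Nat.odd_iff.mp hm
    rw [cSeq, if_neg (Nat.not_even_iff_odd.mpr hm),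
      walkCount_eq_zero_of_odd (Int.odd_iff.mpr (by omega)),
      walkCount_eq_zero_of_odd (Int.odd_iff.mpr (by omega)), sub_zero]

theorem walkCount_add_two (n : ℕ) (t : ℤ) :
    walkCount (n + 2) t = walkCount n (t - 2) + 2 * walkCount n t + walkCount n (t + 2) := by
  simp only [walkCount]
  ring_nf

theorem cSeq_add_two_eq_walkCount_sub (m : ℕ) :
    cSeq (m + 2) = walkCount m 0 - walkCount m 4 := by
  rw [cSeq_eq_walkCount_sub, walkCount_add_two, walkCount_add_two, show (0 : ℤ) - 2 = -2 by rfl,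
    walkCount_neg]
  ring_nf

-- The continuity hypotheses are phrased with `p.1 p.2` rather than `Function.uncurry`, so that
-- `fun_prop` can discharge them when these lemmas are used by `simp`.
theorem intervalIntegrable_intervalIntegral {F : ℝ → ℝ → ℝ}
    (hF : Continuous fun p : ℝ × ℝ => F p.1 p.2) (a b c d : ℝ) :
    IntervalIntegrable (fun x => ∫ y in c..d, F x y) MeasureTheory.volume a b :=
  (intervalIntegral.continuous_parametric_intervalIntegral_of_continuous' hF c d).intervalIntegrable
    a b

theorem integral_integral_add {F G : ℝ → ℝ → ℝ} (hF : Continuous fun p : ℝ × ℝ => F p.1 p.2)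
    (hG : Continuous fun p : ℝ × ℝ => G p.1 p.2) (a b c d : ℝ) :
    ∫ x in a..b, ∫ y in c..d, (F x y + G x y) =
      (∫ x in a..b, ∫ y in c..d, F x y) + ∫ x in a..b, ∫ y in c..d, G x y := by
  have hFx (x : ℝ) : Continuous (F x) := hF.comp (.prodMk_right x)
  have hGx (x : ℝ) : Continuous (G x) := hG.comp (.prodMk_right x)
  rw [intervalIntegral.integral_congr fun x _ => intervalIntegral.integral_add
    ((hFx x).intervalIntegrable c d) ((hGx x).intervalIntegrable c d)]
  exact intervalIntegral.integral_add (intervalIntegrable_intervalIntegral hF a b c d)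
    (intervalIntegrable_intervalIntegral hG a b c d)

theorem integral_integral_sub {F G : ℝ → ℝ → ℝ} (hF : Continuous fun p : ℝ × ℝ => F p.1 p.2)
    (hG : Continuous fun p : ℝ × ℝ => G p.1 p.2) (a b c d : ℝ) :
    ∫ x in a..b, ∫ y in c..d, (F x y - G x y) =
      (∫ x in a..b, ∫ y in c..d, F x y) - ∫ x in a..b, ∫ y in c..d, G x y := by
  have hFx (x : ℝ) : Continuous (F x) := hF.comp (.prodMk_right x)
  have hGx (x : ℝ) : Continuous (G x) := hG.comp (.prodMk_right x)
  rw [intervalIntegral.integral_congr fun x _ => intervalIntegral.integral_sub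
    ((hFx x).intervalIntegrable c d) ((hGx x).intervalIntegrable c d)]
  exact intervalIntegral.integral_sub (intervalIntegrable_intervalIntegral hF a b c d)
    (intervalIntegrable_intervalIntegral hG a b c d)

theorem integral_cos_intCast_mul (r : ℤ) :
    ∫ θ in (0:ℝ)..π, cos (r * θ) = if r = 0 then π else 0 := by
  split_ifs with hr
  · simp [hr]
  · have hr' : (r : ℝ) ≠ 0 := Int.cast_ne_zero.mpr hr
    rw [intervalIntegral.integral_comp_mul_left (fun x => cos x) hr', integral_cos]
    simp [sin_int_mul_pi]

theorem two_mul_cos_mul_cos_intCast_mul (r : ℤ) (θ : ℝ) :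
    2 * cos θ * cos (r * θ) = cos ((r - 1 : ℤ) * θ) + cos ((r + 1 : ℤ) * θ) := by
  push_cast
  rw [sub_mul, add_mul, one_mul, cos_sub, cos_add]
  ring

noncomputable def cosKernel (n : ℕ) (r s : ℤ) (θ₁ θ₂ : ℝ) : ℝ :=
  (2 * cos θ₁ + 2 * cos θ₂) ^ n * (cos (r * θ₁) * cos (s * θ₂))

@[fun_prop]
theorem Continuous.cosKernel {X : Type*} [TopologicalSpace X] {f g : X → ℝ} (hf : Continuous f)
    (hg : Continuous g) (n : ℕ) (r s : ℤ) : Continuous fun x => cosKernel n r s (f x) (g x) := by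
  unfold _root_.cosKernel
  fun_prop

noncomputable def cosMoment (n : ℕ) (r s : ℤ) : ℝ :=
  ∫ θ₁ in (0:ℝ)..π, ∫ θ₂ in (0:ℝ)..π, cosKernel n r s θ₁ θ₂

theorem cosMoment_zero (r s : ℤ) :
    cosMoment 0 r s = π ^ 2 * (walkCount 0 (r + s) * walkCount 0 (r - s)) := by
  simp only [cosMoment, cosKernel, pow_zero, one_mul, intervalIntegral.integral_const_mul,
    intervalIntegral.integral_mul_const, integral_cos_intCast_mul, walkCount]
  split_ifs <;> first | omega | ring

theorem cosMoment_succ (n : ℕ) (r s : ℤ) :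
    cosMoment (n + 1) r s = cosMoment n (r - 1) s + cosMoment n (r + 1) s +
      cosMoment n r (s - 1) + cosMoment n r (s + 1) := by
  have hK (θ₁ θ₂ : ℝ) : cosKernel (n + 1) r s θ₁ θ₂ =
      cosKernel n (r - 1) s θ₁ θ₂ + cosKernel n (r + 1) s θ₁ θ₂ +
        cosKernel n r (s - 1) θ₁ θ₂ + cosKernel n r (s + 1) θ₁ θ₂ := by
    simp only [cosKernel]
    linear_combination (2 * cos θ₁ + 2 * cos θ₂) ^ n *
      (cos (s * θ₂) * two_mul_cos_mul_cos_intCast_mul r θ₁ +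
        cos (r * θ₁) * two_mul_cos_mul_cos_intCast_mul s θ₂)
  simp only [cosMoment, hK]
  rw [integral_integral_add (by fun_prop) (by fun_prop),
    integral_integral_add (by fun_prop) (by fun_prop),
    integral_integral_add (by fun_prop) (by fun_prop)]

theorem cosMoment_eq (n : ℕ) (r s : ℤ) :
    cosMoment n r s = π ^ 2 * (walkCount n (r + s) * walkCount n (r - s)) := by
  induction n generalizing r s with
  | zero => exact cosMoment_zero r s
  | succ n ih =>
    simp only [cosMoment_succ, ih, walkCount]
    ring_nf

theorem pow_mul_weylDensity_eq (n : ℕ) (θ₁ θ₂ : ℝ) :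
    (2 * cos θ₁ + 2 * cos θ₂) ^ n * (cos θ₁ - cos θ₂) ^ 2 * sin θ₁ ^ 2 * sin θ₂ ^ 2 =
      (2 * cosKernel n 0 0 θ₁ θ₂ - cosKernel n 0 2 θ₁ θ₂ - cosKernel n 2 0 θ₁ θ₂
        - cosKernel n 0 4 θ₁ θ₂ - cosKernel n 4 0 θ₁ θ₂ + cosKernel n 2 4 θ₁ θ₂
        + cosKernel n 4 2 θ₁ θ₂ - 2 * cosKernel n 1 1 θ₁ θ₂ + 2 * cosKernel n 1 3 θ₁ θ₂
        + 2 * cosKernel n 3 1 θ₁ θ₂ - 2 * cosKernel n 3 3 θ₁ θ₂) / 16 := by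
  have cos_four_mul (θ : ℝ) : cos (4 * θ) = 2 * (2 * cos θ ^ 2 - 1) ^ 2 - 1 := by
    rw [show 4 * θ = 2 * (2 * θ) by ring, cos_two_mul, cos_two_mul]
  simp only [cosKernel, Int.cast_zero, Int.cast_one, Int.cast_ofNat, zero_mul, one_mul, cos_zero,
    cos_two_mul, cos_three_mul, cos_four_mul, sin_sq]
  ring

/-- The `n`-th trace moment of `USp(4)`:
`(8/π²) ∫_0^π ∫_0^π (2cosθ₁ + 2cosθ₂)^n (cosθ₁ - cosθ₂)² sin²θ₁ sin²θ₂ dθ₁ dθ₂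
  = c_n c_{n+4} - c_{n+2}²`. -/
theorem trace_moment_USp4 (n : ℕ) :
    (8 / π ^ 2) * ∫ θ₁ in (0:ℝ)..π, ∫ θ₂ in (0:ℝ)..π,
        (2 * Real.cos θ₁ + 2 * Real.cos θ₂) ^ n * (Real.cos θ₁ - Real.cos θ₂) ^ 2 *
          Real.sin θ₁ ^ 2 * Real.sin θ₂ ^ 2 =
      cSeq n * cSeq (n + 4) - cSeq (n + 2) ^ 2 := by
  simp only [pow_mul_weylDensity_eq, intervalIntegral.integral_div]
  simp (disch := fun_prop) only [integral_integral_add, integral_integral_sub,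
    intervalIntegral.integral_const_mul, ← cosMoment.eq_1, cosMoment_eq]
  rw [cSeq_eq_walkCount_sub n, cSeq_add_two_eq_walkCount_sub n,
    cSeq_add_two_eq_walkCount_sub (n + 2), walkCount_add_two n 0, walkCount_add_two n 4]
  norm_num [walkCount_neg]
  field_simp
  ring
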